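/- A quantum channel Φ on ℂ^d is both dephasing-covariant and coherence breaking if and only if it admits Kraus operators K_{ij} = √p_{ij} |i⟩⟨j| with p_{ij} ≥ 0 and ∑_{i=0}^{d−1} p_{ij} = 1 for each j; equivalently, Φ(ρ) = ∑_i |i⟩⟨i| Tr(ρ F_i) with each F_i diagonal, F_i = ∑_j p_{ij}|j⟩⟨j|. -/

import Mathlib

open Matrix ComplexOrder

/-- The dephasing map `Δ(ρ) = ∑_i ⟨i|ρ|i⟩ |i⟩⟨i|`. -/
def deph {d : ℕ} (ρ : Matrix (Fin d) (Fin d) ℂ) : Matrix (Fin d) (Fin d) ℂ :=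
  Matrix.diagonal fun i => ρ i i

/-- A quantum channel: admits a Kraus decomposition with the completeness relation. -/
def IsChannel {d : ℕ} (Φ : Matrix (Fin d) (Fin d) ℂ → Matrix (Fin d) (Fin d) ℂ) : Prop :=
  ∃ (N : ℕ) (K : Fin N → Matrix (Fin d) (Fin d) ℂ),
    (∑ n, (K n)ᴴ * K n = 1) ∧ ∀ ρ, Φ ρ = ∑ n, K n * ρ * (K n)ᴴ

/-- A dephasing-covariant operation (DIO): a channel commuting with the dephasing map. -/
def IsDIO {d : ℕ} (Φ : Matrix (Fin d) (Fin d) ℂ → Matrix (Fin d) (Fin d) ℂ) : Prop :=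
  IsChannel Φ ∧ ∀ ρ, deph (Φ ρ) = Φ (deph ρ)

/-- A coherence breaking channel: an incoherent channel (Kraus operators mapping diagonal
matrices to diagonal matrices) whose output is diagonal on every density matrix. -/
def IsCBCfn {d : ℕ} (Φ : Matrix (Fin d) (Fin d) ℂ → Matrix (Fin d) (Fin d) ℂ) : Prop :=
  (∃ (N : ℕ) (K : Fin N → Matrix (Fin d) (Fin d) ℂ),
    (∑ n, (K n)ᴴ * K n = 1) ∧
    (∀ n (A : Matrix (Fin d) (Fin d) ℂ), A.IsDiag → (K n * A * (K n)ᴴ).IsDiag) ∧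
    ∀ ρ, Φ ρ = ∑ n, K n * ρ * (K n)ᴴ) ∧
  ∀ ρ : Matrix (Fin d) (Fin d) ℂ, ρ.PosSemidef → ρ.trace = 1 → (Φ ρ).IsDiag

/-!
Write `Φ` in Kraus form; it is linear. Rank-one projectors `v vᴴ` span all matrices (polarization),
so an output that is diagonal on density matrices is diagonal on every input, and covariance
gives `Φ ρ = Δ (Φ ρ) = Φ (Δ ρ) = ∑_j ρ_jj Φ |j⟩⟨j|`. The diagonal entries `p_ij` of the positive
matrix `Φ |j⟩⟨j|` are nonnegative reals, and trace preservation makes every column of `p` sum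
to one. Conversely the Kraus operators `√p_ij |i⟩⟨j|` realise the classical channel `p`.
-/

namespace Matrix

variable {ι n : Type*} [Fintype ι]

theorem vecMulVec_star_polarization (x y : n → ℂ) :
    vecMulVec x (star y) = (4 : ℂ)⁻¹ • ∑ k : Fin 4, Complex.I ^ (k : ℕ) •
      vecMulVec (x + Complex.I ^ (k : ℕ) • y) (star (x + Complex.I ^ (k : ℕ) • y)) := by
  ext a b
  simp only [vecMulVec_apply, Pi.star_apply, RCLike.star_def, star_add, star_smul, star_pow,
    Complex.conj_I, Fin.sum_univ_four, Fin.isValue, Fin.coe_ofNat_eq_mod, Nat.zero_mod, pow_zero,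
    one_smul, Nat.one_mod, pow_succ, one_mul, mul_neg, neg_smul, Nat.reduceMod, Complex.I_mul_I,
    neg_mul, neg_neg, Nat.mod_succ, smul_apply, add_apply, Pi.add_apply, Pi.smul_apply,
    smul_eq_mul, Pi.neg_apply, neg_apply]
  ring_nf
  simp only [Complex.I_sq]
  ring

variable [Fintype n]

def krausMap (K : ι → Matrix n n ℂ) : Matrix n n ℂ →ₗ[ℂ] Matrix n n ℂ where
  toFun ρ := ∑ i, K i * ρ * (K i)ᴴ
  map_add' ρ σ := by simp only [Matrix.mul_add, Matrix.add_mul, Finset.sum_add_distrib]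
  map_smul' c ρ := by
    simp only [Matrix.mul_smul, Matrix.smul_mul, Finset.smul_sum, RingHom.id_apply]

theorem krausMap_apply (K : ι → Matrix n n ℂ) (ρ : Matrix n n ℂ) :
    krausMap K ρ = ∑ i, K i * ρ * (K i)ᴴ := rfl

theorem krausMap_comp_equiv {κ : Type*} [Fintype κ] (K : ι → Matrix n n ℂ) (e : κ ≃ ι) :
    krausMap (K ∘ e) = krausMap K :=
  LinearMap.ext fun ρ => e.sum_comp fun i => K i * ρ * (K i)ᴴ

theorem PosSemidef.krausMap {ρ : Matrix n n ℂ} (hρ : ρ.PosSemidef) (K : ι → Matrix n n ℂ) :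
    (krausMap K ρ).PosSemidef :=
  posSemidef_sum _ fun i _ => hρ.mul_mul_conjTranspose_same (K i)

variable [DecidableEq n]

theorem trace_krausMap {K : ι → Matrix n n ℂ} (hK : ∑ i, (K i)ᴴ * K i = 1) (ρ : Matrix n n ℂ) :
    (krausMap K ρ).trace = ρ.trace := by
  rw [krausMap_apply, trace_sum]
  simp_rw [trace_mul_cycle _ ρ]
  rw [← trace_sum, ← Finset.sum_mul, hK, Matrix.one_mul]

theorem span_vecMulVec_self_star :
    Submodule.span ℂ (Set.range fun v : n → ℂ => vecMulVec v (star v)) = ⊤ := by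
  refine eq_top_iff.2 fun A _ => ?_
  rw [matrix_eq_sum_single A]
  refine Submodule.sum_mem _ fun i _ => Submodule.sum_mem _ fun j _ => ?_
  have hij : single i j (A i j) = A i j • vecMulVec (Pi.single i 1) (star (Pi.single j 1)) := by
    rw [← Pi.single_star, star_one, ← single_eq_single_vecMulVec_single, smul_single, smul_eq_mul,
      mul_one]
  rw [hij, vecMulVec_star_polarization]
  exact Submodule.smul_mem _ _ <| Submodule.smul_mem _ _ <| Submodule.sum_mem _ fun k _ =>
    Submodule.smul_mem _ _ <| Submodule.subset_span ⟨_, rfl⟩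

theorem isDiag_of_isDiag_density {m : Type*} (L : Matrix n n ℂ →ₗ[ℂ] Matrix m m ℂ)
    (h : ∀ ρ : Matrix n n ℂ, ρ.PosSemidef → ρ.trace = 1 → (L ρ).IsDiag) (A : Matrix n n ℂ) :
    (L A).IsDiag := by
  have hpsd : ∀ ρ : Matrix n n ℂ, ρ.PosSemidef → (L ρ).IsDiag := by
    intro ρ hρ
    by_cases ht : ρ.trace = 0
    · simp [hρ.trace_eq_zero_iff.1 ht, isDiag_zero]
    · have hρ' : (ρ.trace⁻¹ • ρ).PosSemidef := hρ.smul (inv_nonneg.2 hρ.trace_nonneg)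
      have := (h _ hρ' (by rw [trace_smul, smul_eq_mul, inv_mul_cancel₀ ht])).smul ρ.trace
      rwa [← map_smul, smul_smul, mul_inv_cancel₀ ht, one_smul] at this
  have hA : A ∈ Submodule.span ℂ (Set.range fun v : n → ℂ => vecMulVec v (star v)) := by
    simp [span_vecMulVec_self_star]
  induction hA using Submodule.span_induction with
  | mem _ hv => obtain ⟨v, rfl⟩ := hv; exact hpsd _ (posSemidef_vecMulVec_self_star v)
  | zero => simp [isDiag_zero]
  | add _ _ _ _ h₁ h₂ => simpa using h₁.add h₂
  | smul c _ _ h => simpa using h.smul c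

theorem _root_.LinearMap.map_diagonal_of_isDiag {R m : Type*} [CommSemiring R] [DecidableEq m]
    (L : Matrix n n R →ₗ[R] Matrix m m R) (hL : ∀ j, (L (single j j 1)).IsDiag) (v : n → R) :
    L (diagonal v) = diagonal fun i => ∑ j, L (single j j 1) i i * v j := by
  have hv : diagonal v = ∑ j, v j • single j j 1 := by
    simp only [smul_single, smul_eq_mul, mul_one, sum_single_eq_diagonal]
  ext a b
  rw [hv, map_sum, sum_apply]
  simp only [map_smul, smul_apply, smul_eq_mul]
  rcases eq_or_ne a b with rfl | hab
  · simp [mul_comm]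
  · simp [hL _ hab, hab]

theorem exists_stochastic_of_covariant_of_isDiag_density {K : ι → Matrix n n ℂ}
    (hK : ∑ i, (K i)ᴴ * K i = 1)
    (hcov : ∀ ρ, diagonal (fun i => krausMap K ρ i i) = krausMap K (diagonal fun i => ρ i i))
    (hdiag : ∀ ρ : Matrix n n ℂ, ρ.PosSemidef → ρ.trace = 1 → (krausMap K ρ).IsDiag) :
    ∃ p : n → n → ℝ, (∀ i j, 0 ≤ p i j) ∧ (∀ j, ∑ i, p i j = 1) ∧
      ∀ ρ, krausMap K ρ = diagonal fun i => ∑ j, (p i j : ℂ) * ρ j j := by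
  have hall : ∀ A, (krausMap K A).IsDiag := isDiag_of_isDiag_density _ hdiag
  have hnonneg : ∀ i j, 0 ≤ krausMap K (single j j 1) i i := fun i j => by
    rw [← diagonal_single]
    exact ((PosSemidef.diagonal (Pi.single_nonneg.2 zero_le_one)).krausMap K).diag_nonneg
  have hreal : ∀ i j, ((krausMap K (single j j 1) i i).re : ℂ) = krausMap K (single j j 1) i i :=
    fun i j => (Complex.eq_re_of_ofReal_le (r := 0) (by simpa using hnonneg i j)).symm
  refine ⟨fun i j => (krausMap K (single j j 1) i i).re,
    fun i j => (Complex.nonneg_iff.1 (hnonneg i j)).1, fun j => ?_, fun ρ => ?_⟩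
  · rw [← Complex.re_sum]
    exact congrArg Complex.re ((trace_krausMap hK _).trans (trace_single_eq_same _ _))
  · calc krausMap K ρ = diagonal fun i => krausMap K ρ i i := (hall ρ).diagonal_diag.symm
      _ = krausMap K (diagonal fun i => ρ i i) := hcov ρ
      _ = _ := by
        simp only [LinearMap.map_diagonal_of_isDiag _ (fun j => hall _), hreal]

noncomputable def stochasticKraus (p : n → n → ℝ) (ij : n × n) : Matrix n n ℂ :=
  single ij.1 ij.2 (Real.sqrt (p ij.1 ij.2) : ℂ)

variable {p : n → n → ℝ}

theorem stochasticKraus_mul_mul_conjTranspose (hp : ∀ i j, 0 ≤ p i j) (ij : n × n)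
    (ρ : Matrix n n ℂ) :
    stochasticKraus p ij * ρ * (stochasticKraus p ij)ᴴ =
      single ij.1 ij.1 ((p ij.1 ij.2 : ℂ) * ρ ij.2 ij.2) := by
  rw [stochasticKraus, conjTranspose_single, single_mul_mul_single, Complex.star_def,
    Complex.conj_ofReal, mul_right_comm, ← Complex.ofReal_mul, Real.mul_self_sqrt (hp _ _)]

theorem conjTranspose_stochasticKraus_mul_self (hp : ∀ i j, 0 ≤ p i j) (ij : n × n) :
    (stochasticKraus p ij)ᴴ * stochasticKraus p ij = single ij.2 ij.2 (p ij.1 ij.2 : ℂ) := by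
  rw [stochasticKraus, conjTranspose_single, single_mul_single_same, Complex.star_def,
    Complex.conj_ofReal, ← Complex.ofReal_mul, Real.mul_self_sqrt (hp _ _)]

theorem sum_sum_single_same {α : Type*} [AddCommMonoid α] (x : n → n → α) :
    ∑ i, ∑ j, single i i (x i j) = diagonal fun i => ∑ j, x i j :=
  (Finset.sum_congr rfl fun i _ => (map_sum (singleAddMonoidHom (α := α) i i) _ _).symm).trans
    (sum_single_eq_diagonal _)

theorem sum_conjTranspose_stochasticKraus_mul_self (hp : ∀ i j, 0 ≤ p i j)
    (hp1 : ∀ j, ∑ i, p i j = 1) :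
    ∑ ij, (stochasticKraus p ij)ᴴ * stochasticKraus p ij = 1 := by
  simp only [conjTranspose_stochasticKraus_mul_self hp, Fintype.sum_prod_type]
  rw [Finset.sum_comm, sum_sum_single_same]
  simp [← Complex.ofReal_sum, hp1]

theorem krausMap_stochasticKraus (hp : ∀ i j, 0 ≤ p i j) (ρ : Matrix n n ℂ) :
    krausMap (stochasticKraus p) ρ = diagonal fun i => ∑ j, (p i j : ℂ) * ρ j j := by
  simp only [krausMap_apply, stochasticKraus_mul_mul_conjTranspose hp, Fintype.sum_prod_type,
    sum_sum_single_same]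

end Matrix

theorem isDIO_and_isCBCfn_krausMap_stochasticKraus {d : ℕ} {p : Fin d → Fin d → ℝ}
    (hp : ∀ i j, 0 ≤ p i j) (hp1 : ∀ j, ∑ i, p i j = 1) :
    IsDIO (krausMap (stochasticKraus p)) ∧ IsCBCfn (krausMap (stochasticKraus p)) := by
  set K := stochasticKraus p ∘ finProdFinEquiv.symm
  have hK : ∑ n, (K n)ᴴ * K n = 1 :=
    (finProdFinEquiv.symm.sum_comp _).trans (sum_conjTranspose_stochasticKraus_mul_self hp hp1)
  have hΦ : ∀ ρ, krausMap (stochasticKraus p) ρ = ∑ n, K n * ρ * (K n)ᴴ := fun ρ => by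
    rw [← krausMap_apply, krausMap_comp_equiv]
  have hdiag : ∀ ρ, (krausMap (stochasticKraus p) ρ).IsDiag := fun ρ => by
    rw [krausMap_stochasticKraus hp]
    exact isDiag_diagonal _
  refine ⟨⟨⟨_, K, hK, hΦ⟩, fun ρ => ?_⟩, ⟨⟨_, K, hK, fun n A _ => ?_, hΦ⟩, fun ρ _ _ => hdiag ρ⟩⟩
  · simp only [deph, krausMap_stochasticKraus hp, diagonal_apply_eq]
  · show (stochasticKraus p _ * A * (stochasticKraus p _)ᴴ).IsDiag
    rw [stochasticKraus_mul_mul_conjTranspose hp, ← diagonal_single]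
    exact isDiag_diagonal _

/-- A quantum channel `Φ` on `ℂ^d` is both dephasing-covariant and coherence
breaking if and only if `Φ(ρ) = ∑_i |i⟩⟨i| Tr(ρ F_i)` with each `F_i = ∑_j p_{ij}|j⟩⟨j|`
diagonal, `p_{ij} ≥ 0` and `∑_i p_{ij} = 1` for each `j` (equivalently, `Φ` has Kraus
operators `K_{ij} = √p_{ij}|i⟩⟨j|`). -/
theorem dio_and_cbc_iff (d : ℕ)
    (Φ : Matrix (Fin d) (Fin d) ℂ → Matrix (Fin d) (Fin d) ℂ) :
    (IsDIO Φ ∧ IsCBCfn Φ) ↔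
      ∃ p : Fin d → Fin d → ℝ,
        (∀ i j, 0 ≤ p i j) ∧ (∀ j, ∑ i, p i j = 1) ∧
        ∀ ρ, Φ ρ = ∑ i, (∑ j, (p i j : ℂ) * ρ j j) • Matrix.single i i (1 : ℂ) := by
  simp only [smul_single, smul_eq_mul, mul_one, sum_single_eq_diagonal]
  constructor
  · rintro ⟨⟨⟨N, K, hK, hΦ⟩, hcov⟩, -, hdens⟩
    obtain rfl : Φ = krausMap K := funext hΦ
    exact exists_stochastic_of_covariant_of_isDiag_density hK hcov hdens
  · rintro ⟨p, hp, hp1, hΦ⟩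
    obtain rfl : Φ = krausMap (stochasticKraus p) :=
      funext fun ρ => (hΦ ρ).trans (krausMap_stochasticKraus hp ρ).symm
    exact isDIO_and_isCBCfn_krausMap_stochasticKraus hp hp1
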